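/- arXiv:2009.07239 — 7 statements merged into one kernel-verified Lean document; each statement's English description precedes it below -/
import Mathlib

section
/- For every r ≥ 3 and every n ≥ r·C(r, ⌊r/2⌋+1), there exists an r-coloring of the edges of K_n such that every monochromatic cover with at most r−1 components uses components of at least ⌈r/2⌉ different colors. -/
open SimpleGraph

/-- The subgraph of `G` consisting of the edges of color `i`. -/
def colorG {V : Type*} {r : ℕ} (G : SimpleGraph V) (c : Sym2 V → Fin r) (i : Fin r) :
    SimpleGraph V :=
  SimpleGraph.fromRel (fun u v => G.Adj u v ∧ c s(u, v) = i)

/-- For `r ≥ 3` and `n ≥ r·C(r, ⌊r/2⌋+1)` there is an `r`-coloring of `K_n` such that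
every monochromatic cover with at most `r-1` components uses components of at least
`⌈r/2⌉` different colors. -/
theorem lower_bound_half_colors (r n : ℕ) (hr : 3 ≤ r)
    (hn : r * Nat.choose r (r / 2 + 1) ≤ n) :
    ∃ c : Sym2 (Fin n) → Fin r,
      ∀ T : Finset (Fin r × Fin n),
        (∀ w : Fin n, ∃ p ∈ T,
          (colorG (⊤ : SimpleGraph (Fin n)) c p.1).Reachable p.2 w) →
        T.card ≤ r - 1 →
        (r + 1) / 2 ≤ (T.image Prod.fst).card := by
  set k := r / 2 + 1 with hk_def
  have hk : k ≤ r := by omega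
  set N := Nat.choose r k with hN_def
  have hN : 0 < N := Nat.choose_pos hk
  have hcard : Fintype.card {s : Finset (Fin r) // s.card = k} = N := by
    rw [Fintype.card_finset_len, Fintype.card_fin]
  let e : {s : Finset (Fin r) // s.card = k} ≃ Fin N := Fintype.equivFinOfCardEq hcard
  -- assignment of a k-set of colors to each vertex
  let A : Fin n → Finset (Fin r) := fun v => (e.symm ⟨(v : ℕ) % N, Nat.mod_lt _ hN⟩).1
  have hAcard : ∀ v, (A v).card = k := fun v => (e.symm _).2
  have hinter : ∀ u v : Fin n, (A u ∩ A v).Nonempty := by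
    intro u v
    rw [← Finset.card_pos]
    have h1 := Finset.card_union_add_card_inter (A u) (A v)
    have h2 : (A u ∪ A v).card ≤ r := by
      have := Finset.card_le_card (Finset.subset_univ (A u ∪ A v))
      simpa using this
    have h3 := hAcard u
    have h4 := hAcard v
    omega
  -- the coloring
  let c : Sym2 (Fin n) → Fin r := Sym2.lift ⟨fun u v => (A u ∩ A v).min' (hinter u v), by
    intro a b
    apply le_antisymm
    · exact Finset.min'_le _ _ (by rw [Finset.inter_comm]; exact Finset.min'_mem _ _)
    · exact Finset.min'_le _ _ (by rw [Finset.inter_comm]; exact Finset.min'_mem _ _)⟩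
  have hc_mem : ∀ u v : Fin n, c s(u, v) ∈ A u ∩ A v := by
    intro u v
    exact Finset.min'_mem _ (hinter u v)
  -- edges of color i have both endpoints containing i
  have hedge : ∀ (i : Fin r) (u v : Fin n),
      (colorG (⊤ : SimpleGraph (Fin n)) c i).Adj u v → i ∈ A v := by
    intro i u v h
    rw [colorG, SimpleGraph.fromRel_adj] at h
    obtain ⟨hne, h | h⟩ := h
    · have := hc_mem u v
      rw [h.2] at this
      exact (Finset.mem_inter.mp this).2
    · have := hc_mem u v
      rw [Sym2.eq_swap] at h
      rw [h.2] at this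
      exact (Finset.mem_inter.mp this).2
  have hreach : ∀ (i : Fin r) (u w : Fin n),
      (colorG (⊤ : SimpleGraph (Fin n)) c i).Reachable u w → u = w ∨ i ∈ A w := by
    intro i u w h
    obtain ⟨p⟩ := h
    induction p with
    | nil => exact Or.inl rfl
    | cons h p ih =>
      rcases ih with rfl | hw
      · exact Or.inr (hedge i _ _ h)
      · exact Or.inr hw
  refine ⟨c, ?_⟩
  intro T hcover hTcard
  by_contra hlt
  push_neg at hlt
  set C := T.image Prod.fst with hC_def
  -- find a k-set of colors disjoint from C
  have hcompl : k ≤ Cᶜ.card := by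
    rw [Finset.card_compl, Fintype.card_fin]
    omega
  obtain ⟨S, hSsub, hScard⟩ := Finset.exists_subset_card_eq hcompl
  set j : Fin N := e ⟨S, hScard⟩ with hj_def
  -- r vertices all assigned S
  have hvlt : ∀ t : Fin r, (j : ℕ) + (t : ℕ) * N < n := by
    intro t
    have h1 : (j : ℕ) < N := j.isLt
    have h2 : ((t : ℕ) + 1) * N ≤ r * N := Nat.mul_le_mul_right N t.isLt
    calc (j : ℕ) + (t : ℕ) * N < N + (t : ℕ) * N := by omega
    _ = ((t : ℕ) + 1) * N := by ring
    _ ≤ r * N := h2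
    _ ≤ n := hn
  let v : Fin r → Fin n := fun t => ⟨(j : ℕ) + (t : ℕ) * N, hvlt t⟩
  have hAv : ∀ t : Fin r, A (v t) = S := by
    intro t
    have hmod : ((j : ℕ) + (t : ℕ) * N) % N = (j : ℕ) := by
      rw [Nat.add_mul_mod_self_right, Nat.mod_eq_of_lt j.isLt]
    show (e.symm ⟨((j : ℕ) + (t : ℕ) * N) % N, _⟩).1 = S
    have : (⟨((j : ℕ) + (t : ℕ) * N) % N, Nat.mod_lt _ hN⟩ : Fin N) = j := Fin.ext hmod
    rw [this, hj_def, Equiv.symm_apply_apply]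
  have hex : ∀ t : Fin r, ∃ p ∈ T, p.2 = v t := by
    intro t
    obtain ⟨p, hpT, hp⟩ := hcover (v t)
    rcases hreach p.1 p.2 (v t) hp with heq | hmem
    · exact ⟨p, hpT, heq⟩
    · exfalso
      rw [hAv t] at hmem
      have hmemC : p.1 ∈ C := Finset.mem_image_of_mem Prod.fst hpT
      have : p.1 ∈ Cᶜ := hSsub hmem
      rw [Finset.mem_compl] at this
      exact this hmemC
  choose p hpT hp using hex
  have hinj : Set.InjOn p (Finset.univ : Finset (Fin r)) := by
    intro t1 _ t2 _ h
    have hv : v t1 = v t2 := by rw [← hp t1, ← hp t2, h]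
    have : (j : ℕ) + (t1 : ℕ) * N = (j : ℕ) + (t2 : ℕ) * N := congrArg Fin.val hv
    have : (t1 : ℕ) = (t2 : ℕ) := by
      have h' : (t1 : ℕ) * N = (t2 : ℕ) * N := by omega
      exact Nat.eq_of_mul_eq_mul_right hN h'
    exact Fin.ext this
  have hle := Finset.card_le_card_of_injOn p (fun t _ => hpT t) hinj
  rw [Finset.card_univ, Fintype.card_fin] at hle
  omega
end

section
/- In every 2-edge-coloring of a complete bipartite graph G, there exist two monochromatic trees, each of diameter at most 4, whose vertex sets together cover V(G). -/
open SimpleGraph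

section Spider

variable {V : Type*} {H : SimpleGraph V}

/-- A "spider": a rooted subtree of `H` of radius at most 2, given by a parent
function and a level function. -/
structure Spider (H : SimpleGraph V) where
  verts : Set V
  root : V
  root_mem : root ∈ verts
  par : V → V
  lev : V → ℕ
  lev_le : ∀ v, lev v ≤ 2
  par_mem : ∀ v ∈ verts, v ≠ root → par v ∈ verts
  par_adj : ∀ v ∈ verts, v ≠ root → H.Adj v (par v)
  par_lev : ∀ v ∈ verts, v ≠ root → lev (par v) < lev v

namespace Spider

/-- The subgraph associated to a spider. -/
def sub (S : Spider H) : H.Subgraph where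
  verts := S.verts
  Adj a b := (a ∈ S.verts ∧ b ∈ S.verts) ∧
    ((a ≠ S.root ∧ b = S.par a) ∨ (b ≠ S.root ∧ a = S.par b))
  adj_sub := by
    rintro a b ⟨⟨ha, hb⟩, (⟨h1, rfl⟩ | ⟨h1, rfl⟩)⟩
    · exact S.par_adj a ha h1
    · exact (S.par_adj b hb h1).symm
  edge_vert := by
    rintro a b ⟨⟨ha, hb⟩, _⟩; exact ha
  symm := by
    constructor; rintro a b ⟨⟨ha, hb⟩, h⟩; exact ⟨⟨hb, ha⟩, h.symm⟩

/-- The root as an element of the vertex set of `S.sub`. -/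
def rt (S : Spider H) : S.sub.verts := ⟨S.root, S.root_mem⟩

lemma edist_root_le (S : Spider H) (a : S.sub.verts) :
    S.sub.coe.edist a S.rt ≤ (S.lev a.val : ℕ∞) := by
  obtain ⟨n, hn⟩ : ∃ n, S.lev a.val ≤ n := ⟨_, le_rfl⟩
  induction n generalizing a with
  | zero =>
    have ha : a = S.rt := by
      by_contra hne
      have hv : a.val ≠ S.root := fun h => hne (Subtype.ext h)
      have := S.par_lev a.val a.2 hv
      omega
    subst ha
    simp [SimpleGraph.edist_self]
  | succ n ih =>
    by_cases hne : a.val = S.root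
    · have ha : a = S.rt := Subtype.ext hne
      subst ha
      simp [SimpleGraph.edist_self]
    · have hbmem : S.par a.val ∈ S.verts := S.par_mem a.val a.2 hne
      set b : S.sub.verts := ⟨S.par a.val, hbmem⟩ with hbdef
      have hadj : S.sub.coe.Adj a b := by
        show S.sub.Adj a.val b.val
        exact ⟨⟨a.2, hbmem⟩, Or.inl ⟨hne, rfl⟩⟩
      have h1 : S.sub.coe.edist a b ≤ 1 :=
        le_of_eq (SimpleGraph.edist_eq_one_iff_adj.mpr hadj)
      have hlev : S.lev b.val < S.lev a.val := S.par_lev a.val a.2 hne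
      have ihb := ih b (by omega)
      have hcast : (1 : ℕ∞) + (S.lev b.val : ℕ∞) ≤ (S.lev a.val : ℕ∞) := by
        rw [← Nat.cast_one, ← Nat.cast_add, Nat.cast_le]
        omega
      calc S.sub.coe.edist a S.rt
          ≤ S.sub.coe.edist a b + S.sub.coe.edist b S.rt := SimpleGraph.edist_triangle
        _ ≤ 1 + (S.lev b.val : ℕ∞) := add_le_add h1 ihb
        _ ≤ (S.lev a.val : ℕ∞) := hcast

lemma edist_root_le_two (S : Spider H) (a : S.sub.verts) :
    S.sub.coe.edist a S.rt ≤ 2 := by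
  refine (S.edist_root_le a).trans ?_
  exact_mod_cast Nat.cast_le.mpr (S.lev_le a.val)

lemma connected (S : Spider H) : S.sub.coe.Connected := by
  have h2top : (2 : ℕ∞) < ⊤ := by
    rw [show (2 : ℕ∞) = ((2 : ℕ) : ℕ∞) by norm_cast]
    exact ENat.coe_lt_top 2
  have hreach : ∀ a : S.sub.verts, S.sub.coe.Reachable a S.rt := by
    intro a
    apply SimpleGraph.reachable_of_edist_ne_top
    exact ((S.edist_root_le_two a).trans_lt h2top).ne
  haveI : Nonempty S.sub.verts := ⟨S.rt⟩
  exact SimpleGraph.Connected.mk (fun a b => (hreach a).trans (hreach b).symm)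

lemma ediam_le (S : Spider H) : S.sub.coe.ediam ≤ 4 := by
  apply SimpleGraph.ediam_le_of_edist_le
  intro u v
  calc S.sub.coe.edist u v
      ≤ S.sub.coe.edist u S.rt + S.sub.coe.edist S.rt v := SimpleGraph.edist_triangle
    _ ≤ 2 + 2 := by
        refine add_le_add (S.edist_root_le_two u) ?_
        rw [SimpleGraph.edist_comm]
        exact S.edist_root_le_two v
    _ = 4 := by norm_num

lemma acyclic (S : Spider H) : S.sub.coe.IsAcyclic := by
  classical
  intro v p hp
  -- pick a vertex of maximal level on the cycle
  have hne : p.support.toFinset.Nonempty :=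
    ⟨v, List.mem_toFinset.mpr p.start_mem_support⟩
  obtain ⟨m, hmF, hmax'⟩ := p.support.toFinset.exists_max_image (fun x => S.lev x.val) hne
  have hm : m ∈ p.support := List.mem_toFinset.mp hmF
  have hmax : ∀ w ∈ p.support, S.lev w.val ≤ S.lev m.val := fun w hw =>
    hmax' w (List.mem_toFinset.mpr hw)
  set q := p.rotate m hm with hqdef
  have hq : q.IsCycle := hp.rotate hm
  have hqsup : ∀ w ∈ q.support, S.lev w.val ≤ S.lev m.val := by
    intro w hw
    rcases SimpleGraph.Walk.mem_support_iff _ |>.mp hw with h | h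
    · exact h ▸ le_rfl
    · have : w ∈ p.support.tail :=
        (SimpleGraph.Walk.support_rotate p m hm).mem_iff.mp h
      exact hmax w (List.mem_of_mem_tail this)
  -- decompose the cycle: first edge
  obtain ⟨b, hmb, r, hq_eq⟩ := SimpleGraph.Walk.not_nil_iff.mp hq.not_nil
  have hbq : b ∈ q.support := by
    rw [hq_eq, SimpleGraph.Walk.support_cons]
    exact List.mem_cons_of_mem _ r.start_mem_support
  -- last edge, via the reverse of `r`
  have hbm : (b : S.sub.verts) ≠ m := fun h => (h ▸ hmb).ne rfl
  have hrnn : ¬ r.reverse.Nil := SimpleGraph.Walk.not_nil_of_ne (fun h => hbm h.symm)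
  obtain ⟨a, hma, r', hrev⟩ := SimpleGraph.Walk.not_nil_iff.mp hrnn
  have haq : a ∈ q.support := by
    have h1 : a ∈ r.reverse.support := by
      rw [hrev, SimpleGraph.Walk.support_cons]
      exact List.mem_cons_of_mem _ r'.start_mem_support
    rw [SimpleGraph.Walk.support_reverse, List.mem_reverse] at h1
    rw [hq_eq, SimpleGraph.Walk.support_cons]
    exact List.mem_cons_of_mem _ h1
  -- each neighbor of the maximal vertex must be its parent
  have key : ∀ w : S.sub.verts, S.sub.coe.Adj m w → w ∈ q.support →
      (w : V) = S.par m.val := by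
    intro w hadj hwq
    rcases hadj with ⟨⟨hm1, hw1⟩, hor⟩
    rcases hor with ⟨_, h⟩ | ⟨hwr, h⟩
    · exact h
    · exfalso
      have := S.par_lev w.val hw1 hwr
      rw [← h] at this
      have := hqsup w hwq
      omega
  have hb_par : (b : V) = S.par m.val := key b hmb hbq
  have ha_par : (a : V) = S.par m.val := key a hma haq
  have hab : a = b := Subtype.ext (ha_par.trans hb_par.symm)
  subst hab
  -- the edge s(m, a) appears twice in the trail
  have hnodup : q.edges.Nodup := hq.isCircuit.isTrail.edges_nodup
  have hqe : q.edges = s(m, a) :: r.edges := by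
    rw [hq_eq, SimpleGraph.Walk.edges_cons]
  have hmem : s(m, a) ∈ r.edges := by
    have h1 : s(m, a) ∈ r.reverse.edges := by
      rw [hrev, SimpleGraph.Walk.edges_cons]
      exact List.mem_cons_self
    rwa [SimpleGraph.Walk.edges_reverse, List.mem_reverse] at h1
  rw [hqe] at hnodup
  exact (List.nodup_cons.mp hnodup).1 hmem

lemma isTree (S : Spider H) : S.sub.coe.IsTree :=
  ⟨S.connected, S.acyclic⟩

end Spider

/-- A radius-2 ball: a root, spokes adjacent to the root, and leaves each adjacent
to some spoke, span a tree of diameter at most 4. -/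
lemma ball_tree (H : SimpleGraph V) (r : V) (Sp L : Set V)
    (hS : ∀ s ∈ Sp, H.Adj r s) (hrS : r ∉ Sp)
    (hL : ∀ l ∈ L, ∃ s ∈ Sp, H.Adj l s) :
    ∃ T : H.Subgraph, T.verts = insert r (Sp ∪ L) ∧ T.coe.IsTree ∧ T.coe.ediam ≤ 4 := by
  classical
  refine ⟨Spider.sub ⟨insert r (Sp ∪ L), r, by simp,
    fun v => if v ∈ Sp then r else if h : ∃ s ∈ Sp, H.Adj v s then h.choose else r,
    fun v => if v = r then 0 else if v ∈ Sp then 1 else 2,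
    ?_, ?_, ?_, ?_⟩, rfl, Spider.isTree _, Spider.ediam_le _⟩
  · intro v; split_ifs <;> omega
  · intro v hv hvr
    by_cases hs : v ∈ Sp
    · simp [hs]
    · have hvL : v ∈ L := by
        rcases hv with h | h | h
        · exact absurd h hvr
        · exact absurd h hs
        · exact h
      have hex : ∃ s ∈ Sp, H.Adj v s := hL v hvL
      simp only [if_neg hs, dif_pos hex]
      exact Set.mem_insert_iff.mpr (Or.inr (Or.inl hex.choose_spec.1))
  · intro v hv hvr
    by_cases hs : v ∈ Sp
    · simp only [if_pos hs]
      exact (hS v hs).symm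
    · have hvL : v ∈ L := by
        rcases hv with h | h | h
        · exact absurd h hvr
        · exact absurd h hs
        · exact h
      have hex : ∃ s ∈ Sp, H.Adj v s := hL v hvL
      simp only [if_neg hs, dif_pos hex]
      exact hex.choose_spec.2
  · intro v hv hvr
    by_cases hs : v ∈ Sp
    · simp only [if_pos hs, if_neg hvr]
      simp
    · have hvL : v ∈ L := by
        rcases hv with h | h | h
        · exact absurd h hvr
        · exact absurd h hs
        · exact h
      have hex : ∃ s ∈ Sp, H.Adj v s := hL v hvL
      have hcS : hex.choose ∈ Sp := hex.choose_spec.1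
      have hcr : hex.choose ≠ r := fun h => hrS (h ▸ hcS)
      simp only [if_neg hs, dif_pos hex, if_neg hvr, if_neg hcr, if_pos hcS]
      norm_num

end Spider

lemma colorG_adj_bip {X Y : Type*} (c : Sym2 (X ⊕ Y) → Fin 2) (i : Fin 2) (x : X) (y : Y) :
    (colorG (completeBipartiteGraph X Y) c i).Adj (Sum.inl x) (Sum.inr y) ↔
      c s(Sum.inl x, Sum.inr y) = i := by
  rw [colorG, SimpleGraph.fromRel_adj]
  constructor
  · rintro ⟨hne, ⟨_, h⟩ | ⟨_, h⟩⟩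
    · exact h
    · rwa [Sym2.eq_swap] at h
  · intro h
    exact ⟨by simp, Or.inl ⟨by simp, h⟩⟩

/-- In every 2-edge-coloring of a complete bipartite graph, there are two
monochromatic trees, each of diameter at most 4, covering all vertices. -/
theorem two_mono_trees_bipartite {X Y : Type*} [Nonempty X] [Nonempty Y]
    (c : Sym2 (X ⊕ Y) → Fin 2) :
    ∃ (i j : Fin 2) (T₁ : (colorG (completeBipartiteGraph X Y) c i).Subgraph)
      (T₂ : (colorG (completeBipartiteGraph X Y) c j).Subgraph),
      T₁.coe.IsTree ∧ T₁.coe.ediam ≤ 4 ∧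
      T₂.coe.IsTree ∧ T₂.coe.ediam ≤ 4 ∧
      T₁.verts ∪ T₂.verts = Set.univ := by
  classical
  obtain ⟨x₀⟩ := ‹Nonempty X›
  obtain ⟨y₀⟩ := ‹Nonempty Y›
  set col : X → Y → Fin 2 := fun x y => c s(Sum.inl x, Sum.inr y) with hcol
  have hadj : ∀ (i : Fin 2) (x : X) (y : Y),
      (colorG (completeBipartiteGraph X Y) c i).Adj (Sum.inl x) (Sum.inr y) ↔ col x y = i :=
    fun i x y => colorG_adj_bip c i x y
  have fin2 : ∀ a b : Fin 2, a ≠ b → a = 0 ∨ b = 0 := by decide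
  have fin2' : ∀ a : Fin 2, a = 0 ∨ a = 1 := by decide
  -- generic ball construction centered at a left vertex
  have ballL : ∀ (i : Fin 2) (x' : X),
      ∃ T : (colorG (completeBipartiteGraph X Y) c i).Subgraph,
        T.verts = insert (Sum.inl x' : X ⊕ Y)
          ((Sum.inr '' {y | col x' y = i}) ∪
           (Sum.inl '' {x | ∃ y, col x' y = i ∧ col x y = i})) ∧
        T.coe.IsTree ∧ T.coe.ediam ≤ 4 := by
    intro i x'
    apply ball_tree
    · rintro s ⟨y, hy, rfl⟩
      exact (hadj i x' y).mpr hy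
    · rintro ⟨y, _, h⟩
      exact Sum.inr_ne_inl h
    · rintro l ⟨x, ⟨y, hy1, hy2⟩, rfl⟩
      exact ⟨Sum.inr y, ⟨y, hy1, rfl⟩, (hadj i x y).mpr hy2⟩
  -- generic ball construction centered at a right vertex
  have ballR : ∀ (i : Fin 2) (y' : Y),
      ∃ T : (colorG (completeBipartiteGraph X Y) c i).Subgraph,
        T.verts = insert (Sum.inr y' : X ⊕ Y)
          ((Sum.inl '' {x | col x y' = i}) ∪
           (Sum.inr '' {y | ∃ x, col x y' = i ∧ col x y = i})) ∧
        T.coe.IsTree ∧ T.coe.ediam ≤ 4 := by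
    intro i y'
    apply ball_tree
    · rintro s ⟨x, hx, rfl⟩
      exact ((hadj i x y').mpr hx).symm
    · rintro ⟨x, _, h⟩
      exact Sum.inl_ne_inr h
    · rintro l ⟨y, ⟨x, hx1, hx2⟩, rfl⟩
      exact ⟨Sum.inl x, ⟨x, hx1, rfl⟩, ((hadj i x y).mpr hx2).symm⟩
  by_cases h1 : ∀ x, ∃ y, col x y = col x₀ y
  · -- two balls centered at x₀
    obtain ⟨T₁, hv₁, ht₁, hd₁⟩ := ballL 0 x₀
    obtain ⟨T₂, hv₂, ht₂, hd₂⟩ := ballL 1 x₀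
    refine ⟨0, 1, T₁, T₂, ht₁, hd₁, ht₂, hd₂, ?_⟩
    apply Set.eq_univ_of_forall
    rintro (x | y)
    · by_cases hx : x = x₀
      · subst hx
        exact Or.inl (hv₁ ▸ Set.mem_insert _ _)
      · obtain ⟨y, hy⟩ := h1 x
        rcases fin2' (col x₀ y) with h | h
        · refine Or.inl (hv₁ ▸ ?_)
          exact Set.mem_insert_iff.mpr (Or.inr (Or.inr ⟨x, ⟨y, h, hy.trans h⟩, rfl⟩))
        · refine Or.inr (hv₂ ▸ ?_)
          exact Set.mem_insert_iff.mpr (Or.inr (Or.inr ⟨x, ⟨y, h, hy.trans h⟩, rfl⟩))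
    · rcases fin2' (col x₀ y) with h | h
      · exact Or.inl (hv₁ ▸ Set.mem_insert_iff.mpr (Or.inr (Or.inl ⟨y, h, rfl⟩)))
      · exact Or.inr (hv₂ ▸ Set.mem_insert_iff.mpr (Or.inr (Or.inl ⟨y, h, rfl⟩)))
  · by_cases h2 : ∀ y, ∃ x, col x y = col x y₀
    · -- two balls centered at y₀
      obtain ⟨T₁, hv₁, ht₁, hd₁⟩ := ballR 0 y₀
      obtain ⟨T₂, hv₂, ht₂, hd₂⟩ := ballR 1 y₀
      refine ⟨0, 1, T₁, T₂, ht₁, hd₁, ht₂, hd₂, ?_⟩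
      apply Set.eq_univ_of_forall
      rintro (x | y)
      · rcases fin2' (col x y₀) with h | h
        · exact Or.inl (hv₁ ▸ Set.mem_insert_iff.mpr (Or.inr (Or.inl ⟨x, h, rfl⟩)))
        · exact Or.inr (hv₂ ▸ Set.mem_insert_iff.mpr (Or.inr (Or.inl ⟨x, h, rfl⟩)))
      · by_cases hy : y = y₀
        · subst hy
          exact Or.inl (hv₁ ▸ Set.mem_insert _ _)
        · obtain ⟨x, hx⟩ := h2 y
          rcases fin2' (col x y₀) with h | h
          · refine Or.inl (hv₁ ▸ ?_)
            exact Set.mem_insert_iff.mpr (Or.inr (Or.inr ⟨y, ⟨x, h, hx.trans h⟩, rfl⟩))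
          · refine Or.inr (hv₂ ▸ ?_)
            exact Set.mem_insert_iff.mpr (Or.inr (Or.inr ⟨y, ⟨x, h, hx.trans h⟩, rfl⟩))
    · -- both a flipped column and a flipped row exist
      push_neg at h1 h2
      obtain ⟨x₁, hx₁⟩ := h1
      obtain ⟨y₁, hy₁⟩ := h2
      -- every x has a 0-colored edge
      have hx0 : ∀ x, ∃ y, col x y = 0 := by
        intro x
        rcases fin2 _ _ (hy₁ x) with h | h
        · exact ⟨y₁, h⟩
        · exact ⟨y₀, h⟩
      obtain ⟨T₁, hv₁, ht₁, hd₁⟩ := ballL 0 x₀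
      obtain ⟨T₂, hv₂, ht₂, hd₂⟩ := ballL 0 x₁
      refine ⟨0, 0, T₁, T₂, ht₁, hd₁, ht₂, hd₂, ?_⟩
      apply Set.eq_univ_of_forall
      rintro (x | y)
      · obtain ⟨y, hy⟩ := hx0 x
        by_cases h : col x₀ y = 0
        · refine Or.inl (hv₁ ▸ ?_)
          exact Set.mem_insert_iff.mpr (Or.inr (Or.inr ⟨x, ⟨y, h, hy⟩, rfl⟩))
        · have h' : col x₁ y = 0 := by
            rcases fin2 _ _ (hx₁ y) with hh | hh
            · exact hh
            · exact absurd hh h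
          refine Or.inr (hv₂ ▸ ?_)
          exact Set.mem_insert_iff.mpr (Or.inr (Or.inr ⟨x, ⟨y, h', hy⟩, rfl⟩))
      · by_cases h : col x₀ y = 0
        · exact Or.inl (hv₁ ▸ Set.mem_insert_iff.mpr (Or.inr (Or.inl ⟨y, h, rfl⟩)))
        · have h' : col x₁ y = 0 := by
            rcases fin2 _ _ (hx₁ y) with hh | hh
            · exact hh
            · exact absurd hh h
          exact Or.inr (hv₂ ▸ Set.mem_insert_iff.mpr (Or.inr (Or.inl ⟨y, h', rfl⟩)))
end

section
/- In every 2-edge-coloring of a complete bipartite graph G with parts X and Y, at least one of the following holds: (P1) there exist x1, x2 in X with all edges at x_i of color i, or there exist y1, y2 in Y with all edges at y_i of color i; (P2) there are partitions {X1,X2} of X and {Y1,Y2} of Y such that all edges of [X1,Y1] ∪ [X2,Y2] have color 1 and all edges of [X1,Y2] ∪ [X2,Y1] have color 2; or (P3) the subgraph of some color i is connected and spans V(G). -/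
open SimpleGraph

section Aux
open Sum
lemma colorG_adj {X Y : Type*} (c : Sym2 (X ⊕ Y) → Fin 2) (i : Fin 2) (x : X) (y : Y) :
    (colorG (completeBipartiteGraph X Y) c i).Adj (inl x) (inr y) ↔ c s(inl x, inr y) = i := by
  simp [colorG, Sym2.eq_swap]

lemma colorG_adj' {X Y : Type*} (c : Sym2 (X ⊕ Y) → Fin 2) (i : Fin 2) (x : X) (y : Y) :
    (colorG (completeBipartiteGraph X Y) c i).Adj (inr y) (inl x) ↔ c s(inl x, inr y) = i := by
  simp [colorG, Sym2.eq_swap]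

lemma connected_of_split {X Y : Type*} [Nonempty X] [Nonempty Y]
    (c : Sym2 (X ⊕ Y) → Fin 2) (j : Fin 2) (A : Set X) (B : Set Y)
    (hAB : ∀ x ∈ A, ∀ y ∉ B, c s(inl x, inr y) = j)
    (hBA : ∀ x ∉ A, ∀ y ∈ B, c s(inl x, inr y) = j)
    (hAc : Aᶜ.Nonempty) (hBc : Bᶜ.Nonempty)
    (x₀ : X) (y₀ : Y) (hx₀ : x₀ ∈ A) (hy₀ : y₀ ∈ B)
    (hcross : c s(inl x₀, inr y₀) = j) :
    (colorG (completeBipartiteGraph X Y) c j).Connected := by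
  set G := colorG (completeBipartiteGraph X Y) c j with hG
  obtain ⟨x₁, hx₁⟩ := hAc
  obtain ⟨y₁, hy₁⟩ := hBc
  have reach : ∀ v : X ⊕ Y, G.Reachable v (inl x₀) := by
    rintro (x | y)
    · by_cases hx : x ∈ A
      · exact (Adj.reachable ((colorG_adj c j x y₁).2 (hAB x hx y₁ hy₁))).trans
          (Adj.reachable ((colorG_adj' c j x₀ y₁).2 (hAB x₀ hx₀ y₁ hy₁)))
      · exact (Adj.reachable ((colorG_adj c j x y₀).2 (hBA x hx y₀ hy₀))).trans
          (Adj.reachable ((colorG_adj' c j x₀ y₀).2 hcross))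
    · by_cases hy : y ∈ B
      · exact (Adj.reachable ((colorG_adj' c j x₁ y).2 (hBA x₁ hx₁ y hy))).trans
          ((Adj.reachable ((colorG_adj c j x₁ y₀).2 (hBA x₁ hx₁ y₀ hy₀))).trans
            (Adj.reachable ((colorG_adj' c j x₀ y₀).2 hcross)))
      · exact Adj.reachable ((colorG_adj' c j x₀ y).2 (hAB x₀ hx₀ y hy))
  rw [connected_iff]
  exact ⟨fun u v => (reach u).trans (reach v).symm, inferInstance⟩

lemma exists_of_not_connected {X Y : Type*} [Nonempty X] [Nonempty Y]
    (c : Sym2 (X ⊕ Y) → Fin 2) (i j : Fin 2) (hij : j ≠ i)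
    (h : ¬ (colorG (completeBipartiteGraph X Y) c i).Connected) :
    (∃ x, ∀ y, c s(inl x, inr y) = j) ∨ (∃ y, ∀ x, c s(inl x, inr y) = j) ∨
    ∃ (A : Set X) (B : Set Y), A.Nonempty ∧ Aᶜ.Nonempty ∧ B.Nonempty ∧ Bᶜ.Nonempty ∧
      (∀ x ∈ A, ∀ y ∉ B, c s(inl x, inr y) = j) ∧
      (∀ x ∉ A, ∀ y ∈ B, c s(inl x, inr y) = j) := by
  set G := colorG (completeBipartiteGraph X Y) c i with hG
  have hfin : ∀ a : Fin 2, a ≠ i → a = j := fun a ha => by omega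
  rw [connected_iff] at h
  push_neg at h
  have hpre : ¬ G.Preconnected := fun hp => by haveI := h hp; exact IsEmpty.false (inl (Classical.arbitrary X) : X ⊕ Y)
  obtain ⟨u, hu'⟩ := not_forall.mp hpre
  obtain ⟨v, huv⟩ := not_forall.mp hu'
  set S : Set (X ⊕ Y) := {w | G.Reachable u w} with hS
  have hu : u ∈ S := Reachable.refl u
  have hv : v ∉ S := huv
  have key1 : ∀ x y, inl x ∈ S → inr y ∉ S → c s(inl x, inr y) = j := by
    intro x y hx hy
    refine hfin _ fun hc => hy (hx.trans (Adj.reachable ((colorG_adj c i x y).2 hc)))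
  have key2 : ∀ x y, inl x ∉ S → inr y ∈ S → c s(inl x, inr y) = j := by
    intro x y hx hy
    refine hfin _ fun hc => hx (hy.trans (Adj.reachable ((colorG_adj' c i x y).2 hc)))
  set A : Set X := {x | inl x ∈ S}
  set B : Set Y := {y | inr y ∈ S}
  by_cases hA : A.Nonempty
  · by_cases hB : B.Nonempty
    · by_cases hAc : Aᶜ.Nonempty
      · by_cases hBc : Bᶜ.Nonempty
        · exact Or.inr (Or.inr ⟨A, B, hA, hAc, hB, hBc,
            fun x hx y hy => key1 x y hx hy, fun x hx y hy => key2 x y hx hy⟩)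
        · -- B = univ, pick x ∈ Aᶜ
          obtain ⟨x, hx⟩ := hAc
          refine Or.inl ⟨x, fun y => key2 x y hx ?_⟩
          by_contra hy
          exact hBc ⟨y, hy⟩
      · -- A = univ
        rcases v with x | y
        · exact absurd ⟨x, hv⟩ hAc
        · refine Or.inr (Or.inl ⟨y, fun x => key1 x y ?_ hv⟩)
          by_contra hx
          exact hAc ⟨x, hx⟩
    · obtain ⟨x, hx⟩ := hA
      refine Or.inl ⟨x, fun y => key1 x y hx fun hy => hB ⟨y, hy⟩⟩
  · rcases u with x | y
    · exact absurd ⟨x, hu⟩ hA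
    · exact Or.inr (Or.inl ⟨y, fun x => key2 x y (fun hx => hA ⟨x, hx⟩) hu⟩)

lemma split_dichotomy {X Y : Type*} [Nonempty X] [Nonempty Y]
    (c : Sym2 (X ⊕ Y) → Fin 2) (i j : Fin 2) (hij : j ≠ i)
    (A : Set X) (B : Set Y)
    (hA : A.Nonempty) (hAc : Aᶜ.Nonempty) (hB : B.Nonempty) (hBc : Bᶜ.Nonempty)
    (hAB : ∀ x ∈ A, ∀ y ∉ B, c s(inl x, inr y) = j)
    (hBA : ∀ x ∉ A, ∀ y ∈ B, c s(inl x, inr y) = j) :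
    (∃ (X₁ : Set X) (Y₁ : Set Y), ∀ (x : X) (y : Y),
      ((x ∈ X₁ ↔ y ∈ Y₁) → c s(Sum.inl x, Sum.inr y) = 0) ∧
      (¬(x ∈ X₁ ↔ y ∈ Y₁) → c s(Sum.inl x, Sum.inr y) = 1)) ∨
    (colorG (completeBipartiteGraph X Y) c j).Connected := by
  by_cases hex : (∃ x ∈ A, ∃ y ∈ B, c s(inl x, inr y) = j) ∨
      (∃ x ∈ Aᶜ, ∃ y ∈ Bᶜ, c s(inl x, inr y) = j)
  · right
    rcases hex with ⟨x₀, hx₀, y₀, hy₀, hc⟩ | ⟨x₀, hx₀, y₀, hy₀, hc⟩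
    · exact connected_of_split c j A B hAB hBA hAc hBc x₀ y₀ hx₀ hy₀ hc
    · refine connected_of_split c j Aᶜ Bᶜ (fun x hx y hy => hBA x hx y (not_not.mp hy))
        (fun x hx y hy => hAB x (not_not.mp hx) y hy) ?_ ?_ x₀ y₀ hx₀ hy₀ hc
      · rwa [compl_compl]
      · rwa [compl_compl]
  · left
    push_neg at hex
    obtain ⟨h1, h2⟩ := hex
    have hin : ∀ x ∈ A, ∀ y ∈ B, c s(inl x, inr y) = i := fun x hx y hy => by
      have := h1 x hx y hy; omega
    have hout : ∀ x ∉ A, ∀ y ∉ B, c s(inl x, inr y) = i := fun x hx y hy => by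
      have := h2 x hx y hy; omega
    have hij' : (i = 0 ∧ j = 1) ∨ (i = 1 ∧ j = 0) := by omega
    rcases hij' with ⟨hi, hj⟩ | ⟨hi, hj⟩
    · subst hi; subst hj
      refine ⟨A, B, fun x y => ⟨fun h => ?_, fun h => ?_⟩⟩
      · by_cases hx : x ∈ A
        · exact hin x hx y (h.mp hx)
        · exact hout x hx y fun hy => hx (h.mpr hy)
      · by_cases hx : x ∈ A
        · exact hAB x hx y fun hy => h ⟨fun _ => hy, fun _ => hx⟩
        · refine hBA x hx y ?_
          by_contra hy
          exact h ⟨fun h' => absurd h' hx, fun h' => absurd h' hy⟩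
    · subst hi; subst hj
      refine ⟨A, Bᶜ, fun x y => ⟨fun h => ?_, fun h => ?_⟩⟩
      · by_cases hx : x ∈ A
        · exact hAB x hx y (h.mp hx)
        · exact hBA x hx y (not_not.mp fun hy => hx (h.mpr hy))
      · by_cases hx : x ∈ A
        · refine hin x hx y ?_
          by_contra hy
          exact h ⟨fun _ => hy, fun _ => hx⟩
        · refine hout x hx y ?_
          intro hy
          exact h ⟨fun h' => absurd h' hx, fun h' => absurd hy h'⟩

end Aux

/-- Structure lemma for 2-edge-colorings of a complete bipartite graph: one of
(P1), (P2), (P3) holds. -/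
theorem bipartite_two_coloring_structure {X Y : Type*} [Nonempty X] [Nonempty Y]
    (c : Sym2 (X ⊕ Y) → Fin 2) :
    -- (P1)
    ((∃ x₀ x₁ : X, (∀ y : Y, c s(Sum.inl x₀, Sum.inr y) = 0) ∧
        (∀ y : Y, c s(Sum.inl x₁, Sum.inr y) = 1)) ∨
      (∃ y₀ y₁ : Y, (∀ x : X, c s(Sum.inl x, Sum.inr y₀) = 0) ∧
        (∀ x : X, c s(Sum.inl x, Sum.inr y₁) = 1))) ∨
    -- (P2)
    (∃ (X₁ : Set X) (Y₁ : Set Y), ∀ (x : X) (y : Y),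
      ((x ∈ X₁ ↔ y ∈ Y₁) → c s(Sum.inl x, Sum.inr y) = 0) ∧
      (¬(x ∈ X₁ ↔ y ∈ Y₁) → c s(Sum.inl x, Sum.inr y) = 1)) ∨
    -- (P3)
    (∃ i : Fin 2, (colorG (completeBipartiteGraph X Y) c i).Connected) := by
  open Sum in
  by_cases h0 : (colorG (completeBipartiteGraph X Y) c 0).Connected
  · exact Or.inr (Or.inr ⟨0, h0⟩)
  by_cases h1 : (colorG (completeBipartiteGraph X Y) c 1).Connected
  · exact Or.inr (Or.inr ⟨1, h1⟩)
  have d0 := exists_of_not_connected c 0 1 (by decide) h0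
  have d1 := exists_of_not_connected c 1 0 (by decide) h1
  -- handle split cases first
  rcases d0 with d0 | d0 | ⟨A, B, hA, hAc, hB, hBc, hAB, hBA⟩
  rotate_left 2
  · rcases split_dichotomy c 0 1 (by decide) A B hA hAc hB hBc hAB hBA with h | h
    · exact Or.inr (Or.inl h)
    · exact Or.inr (Or.inr ⟨1, h⟩)
  all_goals {
    rcases d1 with d1 | d1 | ⟨A, B, hA, hAc, hB, hBc, hAB, hBA⟩
    rotate_left 2
    · rcases split_dichotomy c 1 0 (by decide) A B hA hAc hB hBc hAB hBA with h | h
      · exact Or.inr (Or.inl h)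
      · exact Or.inr (Or.inr ⟨0, h⟩)
    all_goals first
    | (obtain ⟨x₁, hx₁⟩ := d0; obtain ⟨x₀, hx₀⟩ := d1
       exact Or.inl (Or.inl ⟨x₀, x₁, hx₀, hx₁⟩))
    | (obtain ⟨y₁, hy₁⟩ := d0; obtain ⟨y₀, hy₀⟩ := d1
       exact Or.inl (Or.inr ⟨y₀, y₁, hy₀, hy₁⟩))
    | (obtain ⟨x₁, hx₁⟩ := d0; obtain ⟨y₀, hy₀⟩ := d1
       have h1 := hx₁ y₀; have h0 := hy₀ x₁; omega)
    | (obtain ⟨y₁, hy₁⟩ := d0; obtain ⟨x₀, hx₀⟩ := d1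
       have h1 := hy₁ x₀; have h0 := hx₀ y₁; omega)
  }
end

section
/- For every k ≥ 2 and every 2-edge-coloring of a complete k-partite graph K, there exist at most two monochromatic components whose vertex sets cover V(K). -/
open SimpleGraph

private lemma fin2_cases (x : Fin 2) : x = 0 ∨ x = 1 := by omega

private lemma fin2_eq_of_ne {x y : Fin 2} (h : x ≠ y) : x = 1 - y := by omega

private lemma fin2_zero_of_ne_one {x : Fin 2} (h : x ≠ 1) : x = 0 := by omega

/-- In every 2-edge-coloring of a complete `k`-partite graph (`k ≥ 2`, all parts
nonempty), at most two monochromatic components cover all vertices. -/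
theorem two_cover_multipartite (k : ℕ) (hk : 2 ≤ k) (V : Fin k → Type*)
    [∀ i, Nonempty (V i)] (c : Sym2 (Σ i, V i) → Fin 2) :
    ∃ (i₁ i₂ : Fin 2) (v₁ v₂ : Σ i, V i),
      ∀ w : Σ i, V i,
        (colorG (completeMultipartiteGraph V) c i₁).Reachable v₁ w ∨
        (colorG (completeMultipartiteGraph V) c i₂).Reachable v₂ w := by
  classical
  set G := completeMultipartiteGraph V with hGdef
  -- basic edge-in-color-class lemma
  have adjc : ∀ (a b : Σ i, V i) (e : Fin 2), a.1 ≠ b.1 → c s(a, b) = e →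
      (colorG G c e).Adj a b := by
    intro a b e h he
    refine ⟨fun hab => h (congrArg Sigma.fst hab), Or.inl ⟨h, he⟩⟩
  have reach1 : ∀ (a b : Σ i, V i) (e : Fin 2), a.1 ≠ b.1 → c s(a, b) = e →
      (colorG G c e).Reachable a b := fun a b e h he => (adjc a b e h he).reachable
  have swapc : ∀ (a b : Σ i, V i), c s(a, b) = c s(b, a) := by
    intro a b; rw [Sym2.eq_swap]
  let i0 : Fin k := ⟨0, by omega⟩
  let i1 : Fin k := ⟨1, by omega⟩
  have hi01 : i1 ≠ i0 := by
    intro h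
    have := congrArg Fin.val h
    simp [i0, i1] at this
  let x₀ : V i0 := Classical.arbitrary (V i0)
  let a₀ : Σ i, V i := ⟨i0, x₀⟩
  let b₀ : Σ i, V i := ⟨i1, Classical.arbitrary (V i1)⟩
  have hb₀ : b₀.1 ≠ i0 := hi01
  by_cases hA : ∃ b : Σ i, V i, b.1 ≠ i0 ∧ ∀ x : V i0, c s(⟨i0, x⟩, b) = c s(a₀, b)
  · -- Case A: there is a row constant of color d
    obtain ⟨bs, hbs, hrow⟩ := hA
    refine ⟨c s(a₀, bs), 1 - c s(a₀, bs), bs, a₀, ?_⟩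
    intro w
    by_cases hw : w.1 = i0
    · left
      obtain ⟨wi, wx⟩ := w
      dsimp only at hw
      subst hw
      exact reach1 bs ⟨i0, wx⟩ _ hbs ((swapc bs ⟨i0, wx⟩).trans (hrow wx))
    · by_cases h2 : ∃ x : V i0, c s(⟨i0, x⟩, w) = c s(a₀, bs)
      · left
        obtain ⟨x, hx⟩ := h2
        exact (reach1 bs ⟨i0, x⟩ _ hbs ((swapc bs ⟨i0, x⟩).trans (hrow x))).trans
          (reach1 ⟨i0, x⟩ w _ (fun h => hw h.symm) hx)
      · right
        push_neg at h2
        exact reach1 a₀ w _ (fun h => hw h.symm) (fin2_eq_of_ne (h2 x₀))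
  · -- Case B: no constant row
    push_neg at hA
    by_cases hC : ∃ b : Σ i, V i, b.1 ≠ i0 ∧ ∀ x : V i0,
        c s(⟨i0, x⟩, b) ≠ c s(⟨i0, x⟩, b₀)
    · -- Case B2: a row complementary to b₀ exists
      obtain ⟨b1, hb1, hcomp⟩ := hC
      refine ⟨0, 0, b₀, b1, ?_⟩
      intro w
      by_cases hw : w.1 = i0
      · obtain ⟨wi, wx⟩ := w
        dsimp only at hw
        subst hw
        rcases fin2_cases (c s(⟨i0, wx⟩, b₀)) with h | h
        · left; exact reach1 b₀ ⟨i0, wx⟩ 0 hb₀ ((swapc b₀ ⟨i0, wx⟩).trans h)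
        · right
          have h1 : c s(⟨i0, wx⟩, b1) = 0 :=
            fin2_zero_of_ne_one (fun hh => hcomp wx (hh.trans h.symm))
          exact reach1 b1 ⟨i0, wx⟩ 0 hb1 ((swapc b1 ⟨i0, wx⟩).trans h1)
      · -- w is a "row": since no constant rows, it has an edge of color 0 to part 0
        have hx0 : ∃ x : V i0, c s(⟨i0, x⟩, w) = 0 := by
          obtain ⟨x, hx⟩ := hA w hw
          rcases fin2_cases (c s(a₀, w)) with h | h
          · exact ⟨x₀, h⟩
          · exact ⟨x, fin2_zero_of_ne_one (fun hh => hx (hh.trans h.symm))⟩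
        obtain ⟨x, hx⟩ := hx0
        rcases fin2_cases (c s(⟨i0, x⟩, b₀)) with h | h
        · left
          exact (reach1 b₀ ⟨i0, x⟩ 0 hb₀ ((swapc b₀ ⟨i0, x⟩).trans h)).trans
            (reach1 ⟨i0, x⟩ w 0 (fun hh => hw hh.symm) hx)
        · right
          have h1 : c s(⟨i0, x⟩, b1) = 0 :=
            fin2_zero_of_ne_one (fun hh => hcomp x (hh.trans h.symm))
          exact (reach1 b1 ⟨i0, x⟩ 0 hb1 ((swapc b1 ⟨i0, x⟩).trans h1)).trans
            (reach1 ⟨i0, x⟩ w 0 (fun hh => hw hh.symm) hx)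
    · -- Case B1: every row agrees with b₀ somewhere
      push_neg at hC
      refine ⟨0, 1, b₀, b₀, ?_⟩
      intro w
      by_cases hw : w.1 = i0
      · obtain ⟨wi, wx⟩ := w
        dsimp only at hw
        subst hw
        rcases fin2_cases (c s(⟨i0, wx⟩, b₀)) with h | h
        · left; exact reach1 b₀ ⟨i0, wx⟩ 0 hb₀ ((swapc b₀ ⟨i0, wx⟩).trans h)
        · right; exact reach1 b₀ ⟨i0, wx⟩ 1 hb₀ ((swapc b₀ ⟨i0, wx⟩).trans h)
      · obtain ⟨x, hx⟩ := hC w hw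
        rcases fin2_cases (c s(⟨i0, x⟩, b₀)) with h | h
        · left
          exact (reach1 b₀ ⟨i0, x⟩ 0 hb₀ ((swapc b₀ ⟨i0, x⟩).trans h)).trans
            (reach1 ⟨i0, x⟩ w 0 (fun hh => hw hh.symm) (hx.trans h))
        · right
          exact (reach1 b₀ ⟨i0, x⟩ 1 hb₀ ((swapc b₀ ⟨i0, x⟩).trans h)).trans
            (reach1 ⟨i0, x⟩ w 1 (fun hh => hw hh.symm) (hx.trans h))
end

section
/- For all k ≥ 2 and r ≥ 2, there exists a complete k-partite graph K in which some part X has at least r vertices, and an r-edge-coloring of K, such that every monochromatic cover of K has at least r components; i.e., tc_r(K) ≥ r. -/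
open SimpleGraph

section Aux

variable (k r : ℕ)

def myN : Fin k → ℕ := fun i => if i.val = 0 then r else 1

abbrev myV := Σ i : Fin k, Fin (myN k r i)

def myC (hr : 0 < r) : Sym2 (myV k r) → Fin r :=
  Sym2.lift ⟨fun u v =>
    if u.1.val = 0 ∧ v.1.val ≠ 0 then ⟨u.2.val % r, Nat.mod_lt _ hr⟩
    else if v.1.val = 0 ∧ u.1.val ≠ 0 then ⟨v.2.val % r, Nat.mod_lt _ hr⟩
    else ⟨0, hr⟩,
   by
    intro u v
    by_cases h1 : u.1.val = 0 <;> by_cases h2 : v.1.val = 0 <;> simp [h1, h2]⟩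

def myW (hk : 2 ≤ k) (hr : 0 < r) (j : Fin r) : myV k r :=
  ⟨⟨0, by omega⟩, ⟨j.val, by simp [myN]⟩⟩

lemma no_adj (hk : 2 ≤ k) (hr : 0 < r) (i j : Fin r) (hij : i ≠ j) (v : myV k r) :
    ¬ (colorG (completeMultipartiteGraph (fun i => Fin (myN k r i))) (myC k r hr) i).Adj
      (myW k r hk hr j) v := by
  intro h
  rw [colorG, SimpleGraph.fromRel_adj] at h
  obtain ⟨hne, h⟩ := h
  have hv1 : v.1.val ≠ 0 := by
    intro h0
    rcases h with ⟨hadj, _⟩ | ⟨hadj, _⟩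
    · exact (hadj : (myW k r hk hr j).1 ≠ v.1) (Fin.ext (by simp [myW, h0]))
    · exact (hadj : v.1 ≠ (myW k r hk hr j).1) (Fin.ext (by simp [myW, h0]))
  have hc : myC k r hr s(myW k r hk hr j, v) = j := by
    simp only [myC, Sym2.lift_mk, myW]
    simp [hv1, Fin.ext_iff, Nat.mod_eq_of_lt j.isLt]
  rcases h with ⟨_, hci⟩ | ⟨_, hci⟩
  · exact hij (hci ▸ hc)
  · rw [Sym2.eq_swap] at hci
    exact hij (hci ▸ hc)

lemma reach_eq (hk : 2 ≤ k) (hr : 0 < r) (i j : Fin r) (hij : i ≠ j) (v : myV k r)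
    (h : (colorG (completeMultipartiteGraph (fun i => Fin (myN k r i))) (myC k r hr)
      i).Reachable (myW k r hk hr j) v) : myW k r hk hr j = v := by
  obtain ⟨p⟩ := h
  cases p with
  | nil => rfl
  | cons h' _ => exact absurd h' (no_adj k r hk hr i j hij _)

end Aux

/-- For all `k ≥ 2`, `r ≥ 2` there exists a complete `k`-partite graph with a part of
size at least `r` and an `r`-coloring such that every monochromatic cover has at
least `r` components, i.e. `tc_r(K) ≥ r`. -/
theorem exists_multipartite_tc_ge (k r : ℕ) (hk : 2 ≤ k) (hr : 2 ≤ r) :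
    ∃ n : Fin k → ℕ, (∀ i, 1 ≤ n i) ∧ (∃ i, r ≤ n i) ∧
      ∃ c : Sym2 (Σ i, Fin (n i)) → Fin r,
        ∀ T : Finset (Fin r × Σ i, Fin (n i)),
          (∀ w : Σ i, Fin (n i), ∃ p ∈ T,
            (colorG (completeMultipartiteGraph (fun i => Fin (n i))) c p.1).Reachable
              p.2 w) →
          r ≤ T.card := by
  have hr0 : 0 < r := by omega
  refine ⟨myN k r, ?_, ⟨⟨0, by omega⟩, by simp [myN]⟩, myC k r hr0, ?_⟩
  · intro i
    simp only [myN]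
    split <;> omega
  intro T hT
  choose F hFT hFr using fun j : Fin r => hT (myW k r hk hr0 j)
  have hinj : Function.Injective F := by
    intro j j' hjj'
    by_contra hne
    have h1 := hFr j
    have h2 := hFr j'
    rw [hjj'] at h1
    -- both w j and w j' reachable from (F j').2 in color (F j').1
    set i := (F j').1
    rcases eq_or_ne j i with hji | hji
    · rcases eq_or_ne j' i with hj'i | hj'i
      · exact hne (hji.trans hj'i.symm)
      · have hx : myW k r hk hr0 j' = (F j').2 :=
          reach_eq k r hk hr0 i j' hj'i.symm _ h2.symm
        have := reach_eq k r hk hr0 i j' hj'i.symm _ (hx ▸ h1)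
        have : j'.val = j.val := congrArg (fun v : myV k r => v.2.val) this
        exact hne (Fin.ext this.symm)
    · have hx : myW k r hk hr0 j = (F j').2 :=
        reach_eq k r hk hr0 i j hji.symm _ h1.symm
      have := reach_eq k r hk hr0 i j hji.symm _ (hx ▸ h2)
      have : j.val = j'.val := congrArg (fun v : myV k r => v.2.val) this
      exact hne (Fin.ext this)
  calc r = (Finset.univ : Finset (Fin r)).card := by simp
    _ ≤ T.card := Finset.card_le_card_of_injOn F (fun j _ => hFT j) (hinj.injOn)
end

section
/- Let r ≥ 2 and let G be a complete bipartite graph with finite parts Y and Z whose edges are r-colored. If |Z| < (r/(r−1))^{|Y|}, then there exists a partition {Y_1, …, Y_r} of Y (parts possibly empty) such that every z ∈ Z has, for some i ∈ [r], a neighbor y ∈ Y_i with the edge zy of color i. -/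
/-- If `|Z| < (r/(r-1))^{|Y|}` then for every `r`-coloring of the edges of the
complete bipartite graph with parts `Y` and `Z` there is a good partition of `Y`:
an assignment `P : Y → Fin r` such that every `z ∈ Z` has a neighbor `y` with the
edge `zy` colored `P y`. -/
theorem good_partition_exists {Y Z : Type*} [Fintype Y] [Fintype Z] (r : ℕ)
    (hr : 2 ≤ r) (c : Y → Z → Fin r)
    (h : (Fintype.card Z : ℝ) < ((r : ℝ) / ((r : ℝ) - 1)) ^ (Fintype.card Y)) :
    ∃ P : Y → Fin r, ∀ z : Z, ∃ y : Y, c y z = P y := by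
  classical
  by_contra hc
  push_neg at hc
  -- every partition is bad for some z
  have hsub : (Finset.univ : Finset (Y → Fin r)) ⊆
      Finset.univ.biUnion (fun z : Z =>
        Finset.univ.filter (fun P : Y → Fin r => ∀ y, c y z ≠ P y)) := by
    intro P _
    obtain ⟨z, hz⟩ := hc P
    exact Finset.mem_biUnion.2 ⟨z, Finset.mem_univ z,
      Finset.mem_filter.2 ⟨Finset.mem_univ P, hz⟩⟩
  have hbad : ∀ z : Z,
      (Finset.univ.filter (fun P : Y → Fin r => ∀ y, c y z ≠ P y)).card
        = (r - 1) ^ Fintype.card Y := by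
    intro z
    have h1 : (Finset.univ.filter (fun P : Y → Fin r => ∀ y, c y z ≠ P y)).card
        = Fintype.card {P : Y → Fin r // ∀ y, c y z ≠ P y} := by
      rw [Fintype.card_subtype]
    rw [h1]
    have e : {P : Y → Fin r // ∀ y, c y z ≠ P y} ≃ (∀ y : Y, {x : Fin r // c y z ≠ x}) :=
      Equiv.subtypePiEquivPi
    rw [Fintype.card_congr e, Fintype.card_pi]
    have h2 : ∀ y : Y, Fintype.card {x : Fin r // c y z ≠ x} = r - 1 := by
      intro y
      have := Fintype.card_subtype_compl (fun x : Fin r => c y z = x)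
      simp only [Fintype.card_subtype_eq', Fintype.card_fin] at this
      simpa using this
    simp [h2, Finset.prod_const, Finset.card_univ]
  -- counting
  have hcount : (r : ℕ) ^ Fintype.card Y ≤ Fintype.card Z * (r - 1) ^ Fintype.card Y := by
    calc (r : ℕ) ^ Fintype.card Y = (Finset.univ : Finset (Y → Fin r)).card := by
          simp [Finset.card_univ, Fintype.card_fun]
      _ ≤ (Finset.univ.biUnion (fun z : Z =>
            Finset.univ.filter (fun P : Y → Fin r => ∀ y, c y z ≠ P y))).card :=
          Finset.card_le_card hsub
      _ ≤ ∑ z : Z, (Finset.univ.filter (fun P : Y → Fin r => ∀ y, c y z ≠ P y)).card :=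
          Finset.card_biUnion_le
      _ = Fintype.card Z * (r - 1) ^ Fintype.card Y := by
          simp [hbad, Finset.card_univ]
  -- contradiction with h
  have hr1 : (0 : ℝ) < (r : ℝ) - 1 := by
    have : (2 : ℝ) ≤ (r : ℝ) := by exact_mod_cast hr
    linarith
  have hcast : ((r - 1 : ℕ) : ℝ) = (r : ℝ) - 1 := by
    have : 1 ≤ r := le_trans one_le_two hr
    push_cast [this]
    ring
  have hR : ((r : ℝ)) ^ Fintype.card Y ≤
      (Fintype.card Z : ℝ) * ((r : ℝ) - 1) ^ Fintype.card Y := by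
    have := hcount
    have : ((r ^ Fintype.card Y : ℕ) : ℝ) ≤
        ((Fintype.card Z * (r - 1) ^ Fintype.card Y : ℕ) : ℝ) := by exact_mod_cast this
    push_cast at this
    rwa [hcast] at this
  have hlt : (Fintype.card Z : ℝ) * ((r : ℝ) - 1) ^ Fintype.card Y <
      ((r : ℝ)) ^ Fintype.card Y := by
    have hpow : (0 : ℝ) < ((r : ℝ) - 1) ^ Fintype.card Y := pow_pos hr1 _
    have := (mul_lt_mul_of_pos_right h hpow)
    rwa [div_pow, div_mul_cancel₀] at this
    exact ne_of_gt hpow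
  linarith
end

section
/- Let Y and Z be sets with |Z| ≥ 2^{|Y|}, and let G be the complete bipartite graph on parts Y and Z. Then there exists a 2-coloring of the edges of G such that for every partition {Y_0, Y_1} of Y there is a vertex z ∈ Z with no edge of color i from z to Y_i for either i ∈ {0,1}; i.e., Y has no good partition. -/
universe u

/-- If `|Z| ≥ 2^{|Y|}` then there is a 2-coloring of the edges of the complete
bipartite graph with parts `Y` and `Z` admitting no good partition of `Y`: for every
partition `P : Y → Fin 2` some `z ∈ Z` sends no edge of color `i` to `P⁻¹(i)`. -/
theorem no_good_partition {Y Z : Type u}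
    (h : 2 ^ Cardinal.mk Y ≤ Cardinal.mk Z) :
    ∃ c : Y → Z → Fin 2, ∀ P : Y → Fin 2, ∃ z : Z, ∀ y : Y, c y z ≠ P y := by
  have h' : Cardinal.mk (Y → Fin 2) ≤ Cardinal.mk Z := by
    rw [Cardinal.mk_pi]
    simpa using h
  obtain ⟨e⟩ := Cardinal.le_def _ _ |>.mp h'
  have hne : Nonempty (Y → Fin 2) := ⟨fun _ => 0⟩
  let g : Z → (Y → Fin 2) := Function.invFun e
  have hg : Function.Surjective g := Function.invFun_surjective e.injective
  refine ⟨fun y z => g z y + 1, fun P => ?_⟩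
  obtain ⟨z, hz⟩ := hg P
  refine ⟨z, fun y hy => ?_⟩
  simp only [] at hy
  rw [show g z y = P y from congrFun hz y] at hy
  revert hy
  exact (by decide : ∀ a : Fin 2, a + 1 ≠ a) (P y)
end
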